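/- arXiv:1310.5134 — 2 statements merged into one kernel-verified Lean document; each statement's English description precedes it below -/
import Mathlib

section
/- For the branching from G₂ to SU(3): for a dominant weight λ = n₁ϖ₁ + n₂ϖ₂ of G₂ with n₁ sufficiently large, and a dominant weight μ = m₁ω₁ + m₂ω₂ of SU(3), the branching multiplicity equals min{m₁+1, m₂+1, m₁+m₂−n₂+1, n₂+1} (interpreted as 0 when this minimum is non-positive). In particular, for μ on either one-dimensional face (m₁ = 0 or m₂ = 0) the multiplicity is at most 1. -/
/-!
On the sum-zero lattice the partition function `p_A` has the closed form
`max 0 (min v₀ (-v₂) + 1)`: a decomposition `a·ε₁ + b·ε₂ + c·ε₃` of `v` is determined by `b`,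
which ranges over `[max 0 (-v₁), v₀]`. Substituted into the twelve terms of the alternating sum
over `W(G₂)`, this shows that once `n₁ ≥ n₂ + m₁ + m₂` every term vanishes except those of
`w ∈ {1, s₁, s₂, s₂s₁}` (`s₁`, `s₂` the reflections in the short and the long simple root),
because a coordinate inside the `min` is negative. The four surviving terms add up to the min
formula, a piecewise linear identity settled by case analysis.
-/

/-- Kostant partition function for the multiset `A = {ε₁, ε₂, ε₃}` of short positive roots
of `G₂`, realized in the sum-zero sublattice of `ℤ³` as `ε₁ = (1,0,-1)`, `ε₂ = (1,-1,0)`,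
`ε₃ = (0,1,-1)` (so `ε₁ = ε₂ + ε₃`): the number of ways to write `v` as an `ℕ`-linear
combination `a·ε₁ + b·ε₂ + c·ε₃`. -/
noncomputable def g2PartitionA (v : Fin 3 → ℤ) : ℕ :=
  {t : ℕ × ℕ × ℕ |
    (t.1 : ℤ) + t.2.1 = v 0 ∧ -(t.2.1 : ℤ) + t.2.2 = v 1 ∧ -(t.1 : ℤ) - t.2.2 = v 2}.ncard

/-- Branching multiplicity for `G₂ ⊃ SU(3)` via the Kostant/Heckman branching formula
`m_λ(μ) = Σ_{w ∈ W(G₂)} det(w) · p_A(w(λ+ρ) - ρ - μ)`.  Here `W(G₂) = {±σ : σ ∈ S₃}` acts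
on the sum-zero sublattice of `ℤ³` (with `det(±σ) = sgn(σ)` on the 2-dimensional reflection
representation), `ρ = ρ_{G₂} = (3,-1,-2)`, `λ = n₁ϖ₁ + n₂ϖ₂` with `ϖ₁ = (1,0,-1)`,
`ϖ₂ = (2,-1,-1)`, and `μ = m₁ω₁ + m₂ω₂` with `ω₁ = (1,0,-1)`, `ω₂ = (1,-1,0)`. -/
noncomputable def g2su3Mult (n₁ n₂ m₁ m₂ : ℕ) : ℤ :=
  ∑ σ : Equiv.Perm (Fin 3), ∑ s : Bool,
    (Equiv.Perm.sign σ : ℤ) *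
      g2PartitionA (fun i =>
        (if s then (-1 : ℤ) else 1) *
            ((n₁ : ℤ) * ![(1 : ℤ), 0, -1] (σ⁻¹ i) + (n₂ : ℤ) * ![(2 : ℤ), -1, -1] (σ⁻¹ i)
              + ![(3 : ℤ), -1, -2] (σ⁻¹ i))
          - ![(3 : ℤ), -1, -2] i
          - ((m₁ : ℤ) * ![(1 : ℤ), 0, -1] i + (m₂ : ℤ) * ![(1 : ℤ), -1, 0] i))

theorem Fintype.sum_perm_fin_three {M : Type*} [AddCommMonoid M] (f : Equiv.Perm (Fin 3) → M) :
    ∑ σ, f σ = f 1 + f (.swap 0 1) + f (.swap 0 2) + f (.swap 1 2)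
      + f (.swap 0 1 * .swap 0 2) + f (.swap 0 2 * .swap 0 1) := by
  have huniv : (Finset.univ : Finset (Equiv.Perm (Fin 3))) =
      {1, .swap 0 1, .swap 0 2, .swap 1 2, .swap 0 1 * .swap 0 2, .swap 0 2 * .swap 0 1} := by
    decide
  rw [huniv, Finset.sum_insert (by decide), Finset.sum_insert (by decide),
    Finset.sum_insert (by decide), Finset.sum_insert (by decide), Finset.sum_insert (by decide),
    Finset.sum_singleton]
  simp only [add_assoc]

theorem g2PartitionA_eq (v : Fin 3 → ℤ) :
    (g2PartitionA v : ℤ) = if v 0 + v 1 + v 2 = 0 then max (min (v 0) (-v 2) + 1) 0 else 0 := by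
  unfold g2PartitionA
  split_ifs with hv
  · set L := (-v 1).toNat
    set N := (min (v 0) (-v 2) + 1).toNat
    have hsolutions : {t : ℕ × ℕ × ℕ |
        (t.1 : ℤ) + t.2.1 = v 0 ∧ -(t.2.1 : ℤ) + t.2.2 = v 1 ∧ -(t.1 : ℤ) - t.2.2 = v 2} =
        (Finset.range N).image fun k =>
          ((v 0 - (L + k : ℕ)).toNat, L + k, (v 1 + (L + k : ℕ)).toNat) := by
      ext ⟨a, b, c⟩
      simp only [Set.mem_ofPred_eq, Finset.coe_image, Set.mem_image, Finset.mem_coe,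
        Finset.mem_range, Prod.mk.injEq]
      constructor
      · rintro ⟨h₀, h₁, h₂⟩
        exact ⟨b - L, by omega, by omega, by omega, by omega⟩
      · rintro ⟨k, hk, rfl, rfl, rfl⟩
        omega
    have hinj : Function.Injective fun k : ℕ =>
        (((v 0 - (L + k : ℕ)).toNat, L + k, (v 1 + (L + k : ℕ)).toNat) : ℕ × ℕ × ℕ) :=
      fun k₁ k₂ hk => by simpa using congrArg (·.2.1) hk
    rw [hsolutions, Set.ncard_coe_finset, Finset.card_image_of_injective _ hinj, Finset.card_range]
    omega
  · rw [Nat.cast_eq_zero]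
    convert Set.ncard_empty (ℕ × ℕ × ℕ)
    ext ⟨a, b, c⟩
    simp only [Set.mem_ofPred_eq, Set.mem_empty_iff_false, iff_false]
    omega

theorem max_min_add_one_eq_zero {a b : ℤ} (h : a < 0 ∨ b < 0) : max (min a b + 1) 0 = 0 := by
  omega

theorem g2su3Mult_eq_of_large {n₁ n₂ m₁ m₂ : ℕ} (hlarge : (n₂ : ℤ) + m₁ + m₂ ≤ n₁) :
    g2su3Mult n₁ n₂ m₁ m₂ =
      max (min ((n₁ : ℤ) + 2 * n₂ - m₁ - m₂) (n₁ + n₂ - m₁) + 1) 0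
        - max (min ((n₁ : ℤ) + n₂ - m₁ - m₂ - 1) (n₁ + 2 * n₂ - m₁ + 1) + 1) 0
        - max (min ((n₁ : ℤ) + 2 * n₂ - m₁ - m₂) (n₂ - m₁ - 1) + 1) 0
        + max (min ((n₂ : ℤ) - m₁ - m₂ - 2) (n₁ + 2 * n₂ - m₁ + 1) + 1) 0 := by
  simp only [g2su3Mult, Fintype.sum_bool, g2PartitionA_eq, Fintype.sum_perm_fin_three]
  simp only [Equiv.Perm.sign_one, Equiv.Perm.sign_swap', Equiv.Perm.sign_mul, Units.val_one,
    Units.val_neg, inv_one, mul_inv_rev, Equiv.swap_inv, Equiv.Perm.coe_one, Equiv.Perm.coe_mul,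
    Function.comp_apply, id_eq, Equiv.swap_apply_def, Fin.reduceEq, ↓reduceIte, Bool.false_eq_true,
    Matrix.cons_val, neg_mul, one_mul, mul_ite]
  simp (disch := omega) only [max_min_add_one_eq_zero]
  -- `ring_nf` proves every sum-zero condition, leaving `if True then … else 0`
  ring_nf
  simp only [if_true]
  ring_nf

/-- For `λ = n₁ϖ₁ + n₂ϖ₂` with `n₁` large (`n₁ ≥ n₂ + m₁ + m₂`) and `μ = m₁ω₁ + m₂ω₂`,
the `G₂ ⊃ SU(3)` branching multiplicity equals
`min{m₁+1, m₂+1, m₁+m₂-n₂+1, n₂+1}` (interpreted as `0` when this minimum is nonpositive);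
in particular it is at most `1` when `μ` lies on a one-dimensional face (`m₁ = 0` or `m₂ = 0`). -/
theorem g2su3_branching_min_formula (n₁ n₂ m₁ m₂ : ℕ)
    (hlarge : (n₂ : ℤ) + m₁ + m₂ ≤ n₁) :
    g2su3Mult n₁ n₂ m₁ m₂ =
      max 0 (min (min ((m₁ : ℤ) + 1) ((m₂ : ℤ) + 1))
        (min ((m₁ : ℤ) + m₂ - n₂ + 1) ((n₂ : ℤ) + 1))) ∧
    ((m₁ = 0 ∨ m₂ = 0) → g2su3Mult n₁ n₂ m₁ m₂ ≤ 1) := by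
  rw [g2su3Mult_eq_of_large hlarge]
  omega
end

section
/- Counting problem for the square root system: let A' = {(±1/2, ±1/2)} ⊂ ℝ², p ∈ ℕ, and v = (v₁,v₂) with v₁, v₂ ∈ ½ℤ. Then the number of tuples (n₀₀,n₀₁,n₁₀,n₁₁) ∈ ℕ⁴ with Σnᵢ = p and Σ nᵢ a'ᵢ = v is 0 unless |v₁| ≤ p/2, |v₂| ≤ p/2 and p ≡ 2v₁ ≡ 2v₂ (mod 2), in which case it equals 1 + p/2 − max(|v₁|, |v₂|). -/
/-- The number of `(n₀₀, n₀₁, n₁₀, n₁₁) ∈ ℕ⁴` with total `p` and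
`Σ nᵢ a'ᵢ = v = (v₁, v₂)` for `A' = {(±1/2, ±1/2)}`; here `V₁ = 2v₁`, `V₂ = 2v₂`, so the
equations read `n₀₀ + n₀₁ - n₁₀ - n₁₁ = V₁` and `n₀₀ - n₀₁ + n₁₀ - n₁₁ = V₂`. -/
noncomputable def squareCount (p : ℕ) (V₁ V₂ : ℤ) : ℕ :=
  {t : ℕ × ℕ × ℕ × ℕ | t.1 + t.2.1 + t.2.2.1 + t.2.2.2 = p ∧
    (t.1 : ℤ) + t.2.1 - t.2.2.1 - t.2.2.2 = V₁ ∧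
    (t.1 : ℤ) - t.2.1 + t.2.2.1 - t.2.2.2 = V₂}.ncard

set_option maxHeartbeats 1600000 in
/-- Counting for the square root system `A' = {(±1/2,±1/2)}` (with `V₁ = 2v₁`, `V₂ = 2v₂`):
the count vanishes unless `|v₁| ≤ p/2`, `|v₂| ≤ p/2` and the parities match, in which case
it equals `1 + p/2 - max(|v₁|, |v₂|)`. -/
theorem squareCount_formula (p : ℕ) (V₁ V₂ : ℤ) :
    ((|V₁| ≤ (p : ℤ) ∧ |V₂| ≤ (p : ℤ) ∧ V₁ ≡ (p : ℤ) [ZMOD 2] ∧ V₂ ≡ (p : ℤ) [ZMOD 2]) →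
      (squareCount p V₁ V₂ : ℤ) = 1 + ((p : ℤ) - max |V₁| |V₂|) / 2) ∧
    (¬(|V₁| ≤ (p : ℤ) ∧ |V₂| ≤ (p : ℤ) ∧ V₁ ≡ (p : ℤ) [ZMOD 2] ∧ V₂ ≡ (p : ℤ) [ZMOD 2]) →
      squareCount p V₁ V₂ = 0) := by
  constructor
  · rintro ⟨h1, h2, h3, h4⟩
    have hA1 : |V₁| = max V₁ (-V₁) := abs_eq_max_neg
    have hA2 : |V₂| = max V₂ (-V₂) := abs_eq_max_neg
    have h3' : V₁ % 2 = (p : ℤ) % 2 := h3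
    have h4' : V₂ % 2 = (p : ℤ) % 2 := h4
    obtain ⟨B, hB⟩ : ∃ B : ℤ, (p : ℤ) + V₁ = 2 * B := ⟨((p : ℤ) + V₁) / 2, by omega⟩
    obtain ⟨C, hC⟩ : ∃ C : ℤ, (p : ℤ) + V₂ = 2 * C := ⟨((p : ℤ) + V₂) / 2, by omega⟩
    obtain ⟨D, hD⟩ : ∃ D : ℤ, V₁ + V₂ = 2 * D := ⟨(V₁ + V₂) / 2, by omega⟩
    have hset : {t : ℕ × ℕ × ℕ × ℕ | t.1 + t.2.1 + t.2.2.1 + t.2.2.2 = p ∧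
        (t.1 : ℤ) + t.2.1 - t.2.2.1 - t.2.2.2 = V₁ ∧
        (t.1 : ℤ) - t.2.1 + t.2.2.1 - t.2.2.2 = V₂} =
        ↑((Finset.Icc (max 0 D) (min B C)).image
          (fun a : ℤ => (a.toNat, (B - a).toNat, (C - a).toNat, (a - D).toNat))) := by
      ext ⟨a, b, c, d⟩
      simp only [Set.mem_setOf_eq, Finset.coe_image, Set.mem_image, Finset.mem_coe,
        Finset.mem_Icc, Prod.mk.injEq]
      constructor
      · rintro ⟨e1, e2, e3⟩
        exact ⟨(a : ℤ), ⟨by omega, by omega⟩, by omega, by omega, by omega, by omega⟩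
      · rintro ⟨x, ⟨hx1, hx2⟩, rfl, rfl, rfl, rfl⟩
        refine ⟨by omega, by omega, by omega⟩
    rw [squareCount, hset, Set.ncard_coe_finset]
    rw [Finset.card_image_of_injOn (by
      intro x hx y hy hxy
      simp only [Finset.coe_Icc, Set.mem_Icc] at hx hy
      have h0 := congrArg Prod.fst hxy
      simp only at h0
      omega)]
    rw [Int.card_Icc, hA1, hA2]
    omega
  · intro h
    have hempty : {t : ℕ × ℕ × ℕ × ℕ | t.1 + t.2.1 + t.2.2.1 + t.2.2.2 = p ∧
        (t.1 : ℤ) + t.2.1 - t.2.2.1 - t.2.2.2 = V₁ ∧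
        (t.1 : ℤ) - t.2.1 + t.2.2.1 - t.2.2.2 = V₂} = ∅ := by
      ext ⟨a, b, c, d⟩
      simp only [Set.mem_setOf_eq, Set.mem_empty_iff_false, iff_false]
      rintro ⟨e1, e2, e3⟩
      exact h ⟨abs_le.mpr (by omega), abs_le.mpr (by omega),
        show V₁ % 2 = (p : ℤ) % 2 by omega, show V₂ % 2 = (p : ℤ) % 2 by omega⟩
    rw [squareCount, hempty, Set.ncard_empty]
end
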